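/- arXiv:2408.07379 — 7 statements merged into one kernel-verified Lean document; each statement's English description precedes it below -/
import Mathlib

section
/- Suppose either dist(x,S) ≥ √2 ρ̂ σ or dist(y,S) ≥ √2 ρ̂ σ for some ρ̂ > 0, and ||x-y|| ≥ √2 ρ σ for some ρ > 0. Then the posterior covariance satisfies |R_{S,σ}(x,y)| ≤ e^{-ρ^2} + e^{-ρ̂^2} √r ||K_SS^{-1} K_{Sy}||_2 (in the case dist(x,S) ≥ √2 ρ̂ σ; by symmetry with K_{Sx} in the other case). -/
open Real Filter Matrix

noncomputable def gauss (σ : ℝ) {d : ℕ} (u v : EuclideanSpace ℝ (Fin d)) : ℝ :=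
  Real.exp (-‖u - v‖ ^ 2 / (2 * σ ^ 2))

noncomputable def kmat (σ : ℝ) {d r : ℕ} (s : Fin r → EuclideanSpace ℝ (Fin d)) :
    Matrix (Fin r) (Fin r) ℝ :=
  Matrix.of fun i j => gauss σ (s i) (s j)

noncomputable def kvec (σ : ℝ) {d r : ℕ} (s : Fin r → EuclideanSpace ℝ (Fin d))
    (y : EuclideanSpace ℝ (Fin d)) : Fin r → ℝ :=
  fun i => gauss σ (s i) y

noncomputable def postCov (σ : ℝ) {d r : ℕ} (s : Fin r → EuclideanSpace ℝ (Fin d))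
    (x y : EuclideanSpace ℝ (Fin d)) : ℝ :=
  gauss σ x y - dotProduct (kvec σ s x) ((kmat σ s)⁻¹ *ᵥ (kvec σ s y))

noncomputable def e2norm {r : ℕ} (w : Fin r → ℝ) : ℝ := Real.sqrt (∑ i, (w i) ^ 2)

lemma gauss_symm (σ : ℝ) {d : ℕ} (u v : EuclideanSpace ℝ (Fin d)) :
    gauss σ u v = gauss σ v u := by
  unfold gauss; rw [norm_sub_rev]

lemma gauss_le (σ : ℝ) (hσ : 0 < σ) {d : ℕ} {u v : EuclideanSpace ℝ (Fin d)} {ρ : ℝ}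
    (hρ : 0 ≤ ρ) (h : Real.sqrt 2 * ρ * σ ≤ ‖u - v‖) :
    gauss σ u v ≤ Real.exp (-ρ ^ 2) := by
  unfold gauss
  apply Real.exp_le_exp.mpr
  rw [div_le_iff₀ (by positivity : (0:ℝ) < 2 * σ ^ 2)]
  have h2 : (Real.sqrt 2 * ρ * σ) ^ 2 ≤ ‖u - v‖ ^ 2 :=
    pow_le_pow_left₀ (by positivity) h 2
  have hs : (Real.sqrt 2) ^ 2 = 2 := Real.sq_sqrt (by norm_num)
  nlinarith

lemma sum_abs_le_sqrt {r : ℕ} (w : Fin r → ℝ) :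
    ∑ i, |w i| ≤ Real.sqrt r * Real.sqrt (∑ i, (w i) ^ 2) := by
  rw [← Real.sqrt_mul (by positivity)]
  rw [show ∑ i, (w i)^2 = ∑ i, |w i|^2 by simp [sq_abs]]
  apply Real.le_sqrt_of_sq_le
  have h := sq_sum_le_card_mul_sum_sq (s := (Finset.univ : Finset (Fin r)))
    (f := fun i => |w i|)
  simpa using h

lemma kmat_symm (σ : ℝ) {d r : ℕ} (s : Fin r → EuclideanSpace ℝ (Fin d)) :
    (kmat σ s)ᵀ = kmat σ s := by
  ext i j
  simp [kmat, Matrix.transpose_apply, gauss_symm]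

lemma postCov_symm (σ : ℝ) {d r : ℕ} (s : Fin r → EuclideanSpace ℝ (Fin d))
    (x y : EuclideanSpace ℝ (Fin d)) :
    postCov σ s x y = postCov σ s y x := by
  unfold postCov
  rw [gauss_symm σ x y]
  congr 1
  rw [Matrix.dotProduct_mulVec, ← Matrix.mulVec_transpose,
    Matrix.transpose_nonsing_inv, kmat_symm, dotProduct_comm]

lemma main_bound {d r : ℕ} (σ : ℝ) (hσ : 0 < σ)
    (s : Fin r → EuclideanSpace ℝ (Fin d))
    (x y : EuclideanSpace ℝ (Fin d)) (ρ ρh : ℝ) (hρ : 0 < ρ) (hρh : 0 < ρh)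
    (hxy : Real.sqrt 2 * ρ * σ ≤ ‖x - y‖)
    (hx : ∀ i, Real.sqrt 2 * ρh * σ ≤ ‖x - s i‖) :
    |postCov σ s x y| ≤ Real.exp (-ρ ^ 2) +
      Real.exp (-ρh ^ 2) * Real.sqrt r * e2norm ((kmat σ s)⁻¹ *ᵥ kvec σ s y) := by
  set w := (kmat σ s)⁻¹ *ᵥ kvec σ s y with hw
  unfold postCov
  apply le_trans (abs_sub (gauss σ x y) _)
  gcongr
  · rw [abs_of_pos (show (0:ℝ) < gauss σ x y from Real.exp_pos _)]
    exact gauss_le σ hσ hρ.le hxy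
  · calc |dotProduct (kvec σ s x) w| ≤ ∑ i, |kvec σ s x i * w i| := by
          exact Finset.abs_sum_le_sum_abs _ _
      _ ≤ ∑ i, Real.exp (-ρh ^ 2) * |w i| := by
          apply Finset.sum_le_sum
          intro i _
          rw [abs_mul]
          apply mul_le_mul_of_nonneg_right _ (abs_nonneg _)
          rw [abs_of_pos (show (0:ℝ) < kvec σ s x i from Real.exp_pos _)]
          exact gauss_le σ hσ hρh.le (by rw [norm_sub_rev]; exact hx i)
      _ = Real.exp (-ρh ^ 2) * ∑ i, |w i| := by rw [Finset.mul_sum]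
      _ ≤ Real.exp (-ρh ^ 2) * (Real.sqrt r * Real.sqrt (∑ i, (w i) ^ 2)) := by
          apply mul_le_mul_of_nonneg_left (sum_abs_le_sqrt w) (Real.exp_pos _).le
      _ = Real.exp (-ρh ^ 2) * Real.sqrt r * e2norm w := by rw [e2norm]; ring

theorem stmt4 {d r : ℕ} (σ : ℝ) (hσ : 0 < σ) (hr : 1 ≤ r)
    (s : Fin r → EuclideanSpace ℝ (Fin d)) (hK : IsUnit (kmat σ s).det)
    (x y : EuclideanSpace ℝ (Fin d)) (ρ ρh : ℝ) (hρ : 0 < ρ) (hρh : 0 < ρh)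
    (hxy : Real.sqrt 2 * ρ * σ ≤ ‖x - y‖) :
    ((∀ i, Real.sqrt 2 * ρh * σ ≤ ‖x - s i‖) →
      |postCov σ s x y| ≤ Real.exp (-ρ ^ 2) +
        Real.exp (-ρh ^ 2) * Real.sqrt r * e2norm ((kmat σ s)⁻¹ *ᵥ kvec σ s y)) ∧
    ((∀ i, Real.sqrt 2 * ρh * σ ≤ ‖y - s i‖) →
      |postCov σ s x y| ≤ Real.exp (-ρ ^ 2) +
        Real.exp (-ρh ^ 2) * Real.sqrt r * e2norm ((kmat σ s)⁻¹ *ᵥ kvec σ s x)) := by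
  constructor
  · exact main_bound σ hσ s x y ρ ρh hρ hρh hxy
  · intro hy
    rw [postCov_symm]
    exact main_bound σ hσ s y x ρ ρh hρ hρh (by rw [norm_sub_rev]; exact hxy) hy
end

section
/- For a fixed finite set S ⊆ R^d with invertible Gaussian kernel matrix K_SS and any p ∈ [1,∞], the supremum Γ_p := sup_{y ∈ R^d} ||K_SS^{-1} K_{Sy}||_p is finite and is attained at some y in a closed ball containing S; moreover Γ_p ≥ 1. -/
open Real Filter Matrix

theorem stmt6 {d r : ℕ} (σ : ℝ) (hσ : 0 < σ) (hr : 1 ≤ r)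
    (s : Fin r → EuclideanSpace ℝ (Fin d)) (hK : IsUnit (kmat σ s).det)
    (p : ENNReal) [Fact (1 ≤ p)] :
    ∃ (B : ℝ) (y₀ : EuclideanSpace ℝ (Fin d)),
      (∀ i, ‖s i‖ ≤ B) ∧ ‖y₀‖ ≤ B ∧
      (∀ y : EuclideanSpace ℝ (Fin d),
        ‖(WithLp.equiv p (Fin r → ℝ)).symm ((kmat σ s)⁻¹ *ᵥ kvec σ s y)‖ ≤
        ‖(WithLp.equiv p (Fin r → ℝ)).symm ((kmat σ s)⁻¹ *ᵥ kvec σ s y₀)‖) ∧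
      1 ≤ ‖(WithLp.equiv p (Fin r → ℝ)).symm ((kmat σ s)⁻¹ *ᵥ kvec σ s y₀)‖ := by
  have : Nonempty (Fin r) := ⟨⟨0, hr⟩⟩
  set K := (kmat σ s)⁻¹ with hKdef
  set f : EuclideanSpace ℝ (Fin d) → ℝ := fun y =>
    ‖(WithLp.equiv p (Fin r → ℝ)).symm (K *ᵥ kvec σ s y)‖ with hf
  -- continuity of the auxiliary map on coefficient vectors
  have hh : Continuous fun v : Fin r → ℝ =>
      ‖(WithLp.equiv p (Fin r → ℝ)).symm (K *ᵥ v)‖ := by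
    refine continuous_norm.comp ?_
    refine (PiLp.continuous_toLp p fun _ : Fin r => ℝ).comp ?_
    exact (Matrix.mulVecLin K).continuous_of_finiteDimensional
  -- continuity of kvec
  have hkv : Continuous fun y : EuclideanSpace ℝ (Fin d) => kvec σ s y := by
    refine continuous_pi fun i => ?_
    unfold kvec gauss
    exact Real.continuous_exp.comp
      (((((continuous_const.sub continuous_id).norm.pow 2).neg).div_const _))
  have hcont : Continuous f := hh.comp hkv
  -- kvec tends to 0 at cocompact
  have hkv0 : Tendsto (fun y : EuclideanSpace ℝ (Fin d) => kvec σ s y)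
      (cocompact _) (nhds 0) := by
    refine tendsto_pi_nhds.2 fun i => ?_
    have h1 : Tendsto (fun y : EuclideanSpace ℝ (Fin d) => ‖s i - y‖)
        (cocompact _) atTop := by
      have := tendsto_norm_cocompact_atTop (E := EuclideanSpace ℝ (Fin d))
      refine tendsto_atTop_mono ?_ (this.atTop_add (tendsto_const_nhds (x := -‖s i‖)))
      intro y
      have := norm_sub_norm_le y (s i)
      have h2 : ‖y - s i‖ = ‖s i - y‖ := by rw [norm_sub_rev]
      linarith [h2 ▸ this]
    have h2 : Tendsto (fun y : EuclideanSpace ℝ (Fin d) =>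
        -‖s i - y‖ ^ 2 / (2 * σ ^ 2)) (cocompact _) atBot := by
      apply Tendsto.atBot_div_const (by positivity)
      exact tendsto_neg_atBot_iff.2 ((h1.atTop_mul_atTop₀ h1).congr (by
        intro y; ring))
    show Tendsto (fun y : EuclideanSpace ℝ (Fin d) =>
        Real.exp (-‖s i - y‖ ^ 2 / (2 * σ ^ 2))) (cocompact _) (nhds 0)
    exact Real.tendsto_exp_atBot.comp h2
  -- f tends to 0 at cocompact
  have hf0 : Tendsto f (cocompact _) (nhds 0) := by
    have := (hh.tendsto 0).comp hkv0
    simpa [hf, Function.comp_def] using this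
  -- special point: f (s i₀) = 1
  set i₀ : Fin r := ⟨0, hr⟩
  have hval : f (s i₀) = 1 := by
    have hcol : kvec σ s (s i₀) = (kmat σ s) *ᵥ Pi.single i₀ 1 := by
      funext i
      simp [kvec, kmat, Matrix.mulVec_single, mul_one]
    have : K *ᵥ kvec σ s (s i₀) = Pi.single i₀ 1 := by
      rw [hcol, hKdef, Matrix.mulVec_mulVec, Matrix.nonsing_inv_mul _ hK,
        Matrix.one_mulVec]
    rw [hf]
    simp only [this]
    simp [PiLp.norm_toLp_single p (fun _ : Fin r => ℝ) i₀ (1 : ℝ)]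
  -- global maximum exists
  obtain ⟨y₀, hy₀⟩ : ∃ y₀, ∀ y, f y ≤ f y₀ := by
    apply hcont.exists_forall_ge' (s i₀)
    have : ∀ᶠ y in cocompact (EuclideanSpace ℝ (Fin d)), f y < 1 :=
      hf0.eventually (gt_mem_nhds one_pos)
    filter_upwards [this] with y hy
    rw [hval]; exact hy.le
  refine ⟨max (Finset.univ.sup' (Finset.univ_nonempty) fun i => ‖s i‖) ‖y₀‖, y₀,
    fun i => le_max_of_le_left (Finset.le_sup' (fun i => ‖s i‖) (Finset.mem_univ i)),
    le_max_right _ _, hy₀, ?_⟩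
  calc (1 : ℝ) = f (s i₀) := hval.symm
    _ ≤ f y₀ := hy₀ _
end

section
/- Fix a finite set S of distinct points in R^d and points x, y ∈ R^d with x ∉ S (or y ∉ S), x ≠ y, x, y ∉ S. Then the posterior covariance R_{S,σ}(x,y) = exp(-||x-y||^2/(2σ^2)) - K_{xS} K_SS^{-1} K_{Sy} converges to 0 as σ → 0+. -/
open Real Filter Matrix

lemma gauss_tendsto_zero {d : ℕ} (u v : EuclideanSpace ℝ (Fin d)) (h : u ≠ v) :
    Tendsto (fun σ : ℝ => gauss σ u v) (nhdsWithin 0 (Set.Ioi 0)) (nhds 0) := by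
  have hc : (0:ℝ) < ‖u - v‖ ^ 2 := by
    have h0 : u - v ≠ 0 := sub_ne_zero.mpr h
    exact pow_pos (norm_pos_iff.mpr h0) 2
  have h1 : Tendsto (fun σ : ℝ => 2 * σ ^ 2) (nhdsWithin 0 (Set.Ioi 0))
      (nhdsWithin 0 (Set.Ioi 0)) := by
    apply tendsto_nhdsWithin_of_tendsto_nhds_of_eventually_within
    · have : Tendsto (fun σ : ℝ => 2 * σ ^ 2) (nhds 0) (nhds (2 * 0 ^ 2)) := by
        exact (continuous_const.mul (continuous_pow 2)).tendsto 0
      simpa using this.mono_left nhdsWithin_le_nhds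
    · filter_upwards [self_mem_nhdsWithin] with σ hσ
      have hσ' : (0:ℝ) < σ := hσ
      simp only [Set.mem_Ioi]
      positivity
  have h2 : Tendsto (fun σ : ℝ => (2 * σ ^ 2)⁻¹) (nhdsWithin 0 (Set.Ioi 0)) atTop :=
    tendsto_inv_nhdsGT_zero.comp h1
  have h3 : Tendsto (fun σ : ℝ => (2 * σ ^ 2)⁻¹ * -‖u - v‖ ^ 2) (nhdsWithin 0 (Set.Ioi 0))
      atBot := h2.atTop_mul_const_of_neg (by linarith)
  have h4 := Real.tendsto_exp_atBot.comp h3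
  have heq : (fun σ : ℝ => gauss σ u v) =
      Real.exp ∘ fun σ : ℝ => (2 * σ ^ 2)⁻¹ * -‖u - v‖ ^ 2 := by
    funext σ
    simp only [gauss, Function.comp]
    rw [show -‖u - v‖ ^ 2 / (2 * σ ^ 2) = (2 * σ ^ 2)⁻¹ * -‖u - v‖ ^ 2 by ring]
  rw [heq]
  exact h4

theorem stmt10 {d r : ℕ} (s : Fin r → EuclideanSpace ℝ (Fin d)) (hs : Function.Injective s)
    (x y : EuclideanSpace ℝ (Fin d)) (hx : x ∉ Set.range s) (hy : y ∉ Set.range s)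
    (hxy : x ≠ y)
    (hinv : ∀ᶠ σ in nhdsWithin (0 : ℝ) (Set.Ioi 0), IsUnit (kmat σ s).det) :
    Tendsto (fun σ : ℝ => postCov σ s x y) (nhdsWithin (0 : ℝ) (Set.Ioi 0)) (nhds 0) := by
  set l := nhdsWithin (0 : ℝ) (Set.Ioi 0) with hl
  have hK : Tendsto (fun σ => kmat σ s) l (nhds (1 : Matrix (Fin r) (Fin r) ℝ)) := by
    refine tendsto_pi_nhds.mpr ?_
    intro i
    rw [tendsto_pi_nhds]
    intro j
    by_cases hij : i = j
    · subst hij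
      have : (fun σ => kmat σ s i i) = fun _ : ℝ => (1:ℝ) := by
        funext σ; simp [kmat, gauss]
      rw [this, Matrix.one_apply_eq]
      exact tendsto_const_nhds
    · have hsij : s i ≠ s j := fun hh => hij (hs hh)
      have := gauss_tendsto_zero (s i) (s j) hsij
      simpa [kmat, Matrix.one_apply, hij] using this
  have hdet : Tendsto (fun σ => (kmat σ s).det) l (nhds 1) := by
    have := (Continuous.matrix_det (continuous_id : Continuous fun A : Matrix (Fin r) (Fin r) ℝ => A)).continuousAt
      (x := (1 : Matrix (Fin r) (Fin r) ℝ))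
    simpa [Function.comp_def] using this.tendsto.comp hK
  have hadj : Tendsto (fun σ => (kmat σ s).adjugate) l
      (nhds (1 : Matrix (Fin r) (Fin r) ℝ)) := by
    have := (Continuous.matrix_adjugate (continuous_id : Continuous fun A : Matrix (Fin r) (Fin r) ℝ => A)).continuousAt
      (x := (1 : Matrix (Fin r) (Fin r) ℝ))
    simpa [Matrix.adjugate_one, Function.comp_def] using this.tendsto.comp hK
  have hdetinv : Tendsto (fun σ => ((kmat σ s).det)⁻¹) l (nhds 1) := by
    simpa using hdet.inv₀ one_ne_zero
  have hKinv : Tendsto (fun σ => (kmat σ s)⁻¹) l (nhds (1 : Matrix (Fin r) (Fin r) ℝ)) := by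
    have : (fun σ => (kmat σ s)⁻¹) = fun σ => ((kmat σ s).det)⁻¹ • (kmat σ s).adjugate := by
      funext σ; rw [Matrix.inv_def, Ring.inverse_eq_inv']
    rw [this]
    simpa using hdetinv.smul hadj
  have hKinv' : ∀ i j, Tendsto (fun σ => (kmat σ s)⁻¹ i j) l
      (nhds ((1 : Matrix (Fin r) (Fin r) ℝ) i j)) := by
    intro i j
    exact (tendsto_pi_nhds.mp (tendsto_pi_nhds.mp hKinv i)) j
  have hvx : ∀ i, Tendsto (fun σ => kvec σ s x i) l (nhds 0) := by
    intro i
    exact gauss_tendsto_zero (s i) x (fun hh => hx ⟨i, hh⟩)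
  have hvy : ∀ i, Tendsto (fun σ => kvec σ s y i) l (nhds 0) := by
    intro i
    exact gauss_tendsto_zero (s i) y (fun hh => hy ⟨i, hh⟩)
  have hdot : Tendsto (fun σ => ∑ i, kvec σ s x i * ∑ j, (kmat σ s)⁻¹ i j * kvec σ s y j) l
      (nhds (∑ i : Fin r, (0:ℝ) * ∑ j : Fin r, (1 : Matrix (Fin r) (Fin r) ℝ) i j * 0)) := by
    refine tendsto_finset_sum _ fun i _ => (hvx i).mul ?_
    exact tendsto_finset_sum _ fun j _ => (hKinv' i j).mul (hvy j)
  have hdot0 : Tendsto (fun σ => dotProduct (kvec σ s x) ((kmat σ s)⁻¹ *ᵥ (kvec σ s y))) l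
      (nhds 0) := by
    have h0 : (∑ i : Fin r, (0:ℝ) * ∑ j : Fin r, (1 : Matrix (Fin r) (Fin r) ℝ) i j * 0) = 0 := by
      simp
    rw [← h0]
    simpa [dotProduct, Matrix.mulVec] using hdot
  have hg := gauss_tendsto_zero x y hxy
  have := hg.sub hdot0
  simpa [postCov] using this
end

section
/- If dist(x,S) ≥ √2 ρ̂ σ for some ρ̂ > 0, then the posterior covariance satisfies the lower bound |R_{S,σ}(x,y)| ≥ κ_σ(x,y) - √r e^{-ρ̂^2} ||K_SS^{-1} K_{Sy}||_2. -/
open Real Filter Matrix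

theorem stmt11 {d r : ℕ} (σ : ℝ) (hσ : 0 < σ) (s : Fin r → EuclideanSpace ℝ (Fin d))
    (hK : IsUnit (kmat σ s).det) (x y : EuclideanSpace ℝ (Fin d)) (ρh : ℝ) (hρh : 0 < ρh)
    (hx : ∀ i, Real.sqrt 2 * ρh * σ ≤ ‖x - s i‖) :
    gauss σ x y - Real.sqrt r * Real.exp (-ρh ^ 2) * e2norm ((kmat σ s)⁻¹ *ᵥ kvec σ s y) ≤
      |postCov σ s x y| := by
  set w := (kmat σ s)⁻¹ *ᵥ kvec σ s y with hw
  -- bound: each kvec σ s x i ≤ exp (-ρh^2)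
  have hk : ∀ i, |kvec σ s x i| ≤ Real.exp (-ρh ^ 2) := by
    intro i
    have h1 : Real.sqrt 2 * ρh * σ ≤ ‖s i - x‖ := by
      rw [norm_sub_rev]; exact hx i
    have h2 : (Real.sqrt 2 * ρh * σ) ^ 2 ≤ ‖s i - x‖ ^ 2 := by
      apply sq_le_sq' _ h1
      nlinarith [Real.sqrt_nonneg 2, hρh.le, hσ.le, norm_nonneg (s i - x),
        mul_nonneg (mul_nonneg (Real.sqrt_nonneg 2) hρh.le) hσ.le]
    have hs2 : Real.sqrt 2 ^ 2 = 2 := Real.sq_sqrt (by norm_num)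
    have h3 : 2 * ρh ^ 2 * σ ^ 2 ≤ ‖s i - x‖ ^ 2 := by nlinarith
    rw [kvec, gauss, abs_of_pos (Real.exp_pos _)]
    apply Real.exp_le_exp.mpr
    rw [div_le_iff₀ (by positivity)]
    nlinarith [sq_nonneg σ]
  -- Cauchy–Schwarz style bound on the dot product
  have hdot : |dotProduct (kvec σ s x) w| ≤ Real.sqrt r * Real.exp (-ρh ^ 2) * e2norm w := by
    calc |dotProduct (kvec σ s x) w| ≤ ∑ i, |kvec σ s x i * w i| := by
          exact Finset.abs_sum_le_sum_abs _ _
      _ ≤ ∑ i, Real.exp (-ρh ^ 2) * |w i| := by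
          apply Finset.sum_le_sum
          intro i _
          rw [abs_mul]
          exact mul_le_mul_of_nonneg_right (hk i) (abs_nonneg _)
      _ = Real.exp (-ρh ^ 2) * ∑ i, |w i| := by rw [Finset.mul_sum]
      _ ≤ Real.exp (-ρh ^ 2) * (Real.sqrt r * e2norm w) := by
          apply mul_le_mul_of_nonneg_left _ (Real.exp_pos _).le
          have h := sq_sum_le_card_mul_sum_sq (s := (Finset.univ : Finset (Fin r)))
            (f := fun i => |w i|)
          simp only [sq_abs, Finset.card_univ, Fintype.card_fin] at h
          have hnn : (0:ℝ) ≤ ∑ i, |w i| := Finset.sum_nonneg fun i _ => abs_nonneg _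
          calc ∑ i, |w i| = Real.sqrt ((∑ i, |w i|) ^ 2) := (Real.sqrt_sq hnn).symm
            _ ≤ Real.sqrt ((r : ℝ) * ∑ i, w i ^ 2) := Real.sqrt_le_sqrt h
            _ = Real.sqrt r * e2norm w := by
                rw [e2norm, Real.sqrt_mul (Nat.cast_nonneg r)]
      _ = Real.sqrt r * Real.exp (-ρh ^ 2) * e2norm w := by ring
  have hg : 0 ≤ gauss σ x y := (Real.exp_pos _).le
  calc gauss σ x y - Real.sqrt r * Real.exp (-ρh ^ 2) * e2norm w
      ≤ gauss σ x y - |dotProduct (kvec σ s x) w| := by linarith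
    _ ≤ |gauss σ x y - dotProduct (kvec σ s x) w| := by
        have := abs_sub_abs_le_abs_sub (gauss σ x y) (dotProduct (kvec σ s x) w)
        rw [abs_of_nonneg hg] at this
        linarith
    _ = |postCov σ s x y| := by rw [postCov]
end

section
/- If dist(x,S) ≥ √2 ρ̂ σ (or dist(y,S) ≥ √2 ρ̂ σ) for some ρ̂ > 0, and there exists c ≥ 0 such that ||x-y|| ≤ σ √(2 ln(1+c)), then |R_{S,σ}(x,y)| ≥ 1/(1+c) - √r e^{-ρ̂^2} Γ_2, where Γ_2 = sup_{z ∈ R^d} ||K_SS^{-1} K_{Sz}||_2. -/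
open Real Filter Matrix

lemma abs_dot_le {r : ℕ} (f g : Fin r → ℝ) : |dotProduct f g| ≤ e2norm f * e2norm g := by
  rw [e2norm, e2norm, ← Real.sqrt_mul (by positivity), ← Real.sqrt_sq_eq_abs]
  exact Real.sqrt_le_sqrt (Finset.sum_mul_sq_le_sq_mul_sq _ _ _)

lemma kvec_bound {d r : ℕ} (σ : ℝ) (hσ : 0 < σ) (s : Fin r → EuclideanSpace ℝ (Fin d))
    (ρh : ℝ) (hρh : 0 < ρh) (z : EuclideanSpace ℝ (Fin d))
    (hz : ∀ i, Real.sqrt 2 * ρh * σ ≤ ‖z - s i‖) :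
    e2norm (kvec σ s z) ≤ Real.sqrt r * Real.exp (-ρh ^ 2) := by
  have hbd : ∀ i, (kvec σ s z i) ^ 2 ≤ Real.exp (-ρh ^ 2) ^ 2 := by
    intro i
    have h1 : kvec σ s z i ≤ Real.exp (-ρh ^ 2) := by
      rw [kvec, gauss]
      apply Real.exp_le_exp.mpr
      have hn : ‖s i - z‖ = ‖z - s i‖ := norm_sub_rev _ _
      have h2 : 2 * ρh ^ 2 * σ ^ 2 ≤ ‖s i - z‖ ^ 2 := by
        rw [hn]
        have := hz i
        have h0 : 0 ≤ Real.sqrt 2 * ρh * σ := by positivity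
        calc 2 * ρh ^ 2 * σ ^ 2 = (Real.sqrt 2 * ρh * σ) ^ 2 := by
              rw [mul_pow, mul_pow, Real.sq_sqrt (by norm_num : (2:ℝ) ≥ 0)]
          _ ≤ ‖z - s i‖ ^ 2 := by nlinarith [hz i, norm_nonneg (z - s i)]
      rw [div_le_iff₀ (by positivity), neg_mul]
      nlinarith
    have h0 : 0 ≤ kvec σ s z i := Real.exp_nonneg _
    nlinarith
  rw [e2norm]
  calc Real.sqrt (∑ i, (kvec σ s z i) ^ 2)
      ≤ Real.sqrt (∑ _i : Fin r, Real.exp (-ρh ^ 2) ^ 2) :=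
        Real.sqrt_le_sqrt (Finset.sum_le_sum fun i _ => hbd i)
    _ = Real.sqrt r * Real.exp (-ρh ^ 2) := by
        rw [Finset.sum_const, Finset.card_univ, Fintype.card_fin, nsmul_eq_mul,
          Real.sqrt_mul (by positivity), Real.sqrt_sq (Real.exp_nonneg _)]

theorem stmt12 {d r : ℕ} (σ : ℝ) (hσ : 0 < σ) (s : Fin r → EuclideanSpace ℝ (Fin d))
    (hK : IsUnit (kmat σ s).det) (x y : EuclideanSpace ℝ (Fin d)) (ρh : ℝ) (hρh : 0 < ρh)
    (Γ : ℝ)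
    (hΓ : IsLUB (Set.range fun z : EuclideanSpace ℝ (Fin d) =>
      e2norm ((kmat σ s)⁻¹ *ᵥ kvec σ s z)) Γ)
    (hfar : (∀ i, Real.sqrt 2 * ρh * σ ≤ ‖x - s i‖) ∨
            (∀ i, Real.sqrt 2 * ρh * σ ≤ ‖y - s i‖))
    (c : ℝ) (hc : 0 ≤ c) (hxy : ‖x - y‖ ≤ σ * Real.sqrt (2 * Real.log (1 + c))) :
    1 / (1 + c) - Real.sqrt r * Real.exp (-ρh ^ 2) * Γ ≤ |postCov σ s x y| := by
  have h1c : (0:ℝ) < 1 + c := by linarith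
  have hln : 0 ≤ Real.log (1 + c) := Real.log_nonneg (by linarith)
  -- gauss lower bound
  have hg : 1 / (1 + c) ≤ gauss σ x y := by
    rw [gauss]
    have hsq : ‖x - y‖ ^ 2 ≤ σ ^ 2 * (2 * Real.log (1 + c)) := by
      have h0 : 0 ≤ σ * Real.sqrt (2 * Real.log (1 + c)) := by positivity
      calc ‖x - y‖ ^ 2 ≤ (σ * Real.sqrt (2 * Real.log (1 + c))) ^ 2 := by
            nlinarith [norm_nonneg (x - y)]
        _ = σ ^ 2 * (2 * Real.log (1 + c)) := by
            rw [mul_pow, Real.sq_sqrt (by positivity)]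
    have : -Real.log (1 + c) ≤ -‖x - y‖ ^ 2 / (2 * σ ^ 2) := by
      rw [neg_div, neg_le_neg_iff, div_le_iff₀ (by positivity)]
      nlinarith
    calc 1 / (1 + c) = Real.exp (-Real.log (1 + c)) := by
          rw [Real.exp_neg, Real.exp_log h1c, one_div]
      _ ≤ _ := Real.exp_le_exp.mpr this
  -- bound the dot product
  set A := (kmat σ s)⁻¹ with hA
  have hΓub : ∀ z, e2norm (A *ᵥ kvec σ s z) ≤ Γ := fun z => hΓ.1 ⟨z, rfl⟩
  have hdot : |dotProduct (kvec σ s x) (A *ᵥ kvec σ s y)|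
      ≤ Real.sqrt r * Real.exp (-ρh ^ 2) * Γ := by
    have key : ∀ u v : EuclideanSpace ℝ (Fin d),
        (∀ i, Real.sqrt 2 * ρh * σ ≤ ‖u - s i‖) →
        |dotProduct (kvec σ s u) (A *ᵥ kvec σ s v)|
          ≤ Real.sqrt r * Real.exp (-ρh ^ 2) * Γ := by
      intro u v hu
      calc |dotProduct (kvec σ s u) (A *ᵥ kvec σ s v)|
          ≤ e2norm (kvec σ s u) * e2norm (A *ᵥ kvec σ s v) := abs_dot_le _ _
        _ ≤ Real.sqrt r * Real.exp (-ρh ^ 2) * Γ := by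
            apply mul_le_mul (kvec_bound σ hσ s ρh hρh u hu) (hΓub v)
              (by rw [e2norm]; positivity) (by positivity)
    rcases hfar with hx | hy
    · exact key x y hx
    · have hsymm : Aᵀ = A := by
        rw [hA, Matrix.transpose_nonsing_inv]
        congr 1
        ext i j
        simp only [Matrix.transpose_apply, kmat, Matrix.of_apply, gauss, norm_sub_rev]
      have : dotProduct (kvec σ s x) (A *ᵥ kvec σ s y)
          = dotProduct (kvec σ s y) (A *ᵥ kvec σ s x) := by
        rw [Matrix.dotProduct_mulVec, ← Matrix.vecMul_transpose, hsymm,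
          dotProduct_comm]
      rw [this]
      exact key y x hy
  calc 1 / (1 + c) - Real.sqrt r * Real.exp (-ρh ^ 2) * Γ
      ≤ gauss σ x y - |dotProduct (kvec σ s x) (A *ᵥ kvec σ s y)| := by
        linarith
    _ ≤ |postCov σ s x y| := by
        rw [postCov, ← hA]
        have h2 := abs_sub_abs_le_abs_sub (gauss σ x y)
          (dotProduct (kvec σ s x) (A *ᵥ kvec σ s y))
        have h1 : |gauss σ x y| = gauss σ x y := abs_of_nonneg (Real.exp_nonneg _)
        rw [h1] at h2
        linarith
end

section
/- If dist(x,S) ≥ √2 ρ̂ σ for some ρ̂ > (ln(√r Γ_2))^{1/2} (assuming √r Γ_2 ≥ 1), then the posterior variance satisfies |R_{S,σ}(x,x)| ≥ 1 - e^{-ρ̂^2} √r Γ_2 > 0. -/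
open Real Filter Matrix

theorem stmt14 {d r : ℕ} (σ : ℝ) (hσ : 0 < σ) (s : Fin r → EuclideanSpace ℝ (Fin d))
    (hK : IsUnit (kmat σ s).det) (x : EuclideanSpace ℝ (Fin d)) (Γ : ℝ)
    (hΓ : IsLUB (Set.range fun z : EuclideanSpace ℝ (Fin d) =>
      e2norm ((kmat σ s)⁻¹ *ᵥ kvec σ s z)) Γ)
    (hΓ1 : 1 ≤ Real.sqrt r * Γ) (ρh : ℝ)
    (hρh : Real.sqrt (Real.log (Real.sqrt r * Γ)) < ρh)
    (hx : ∀ i, Real.sqrt 2 * ρh * σ ≤ ‖x - s i‖) :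
    1 - Real.exp (-ρh ^ 2) * Real.sqrt r * Γ ≤ |postCov σ s x x| ∧
    0 < 1 - Real.exp (-ρh ^ 2) * Real.sqrt r * Γ := by
  set k := kvec σ s x with hk
  set v := (kmat σ s)⁻¹ *ᵥ k with hv
  have hρpos : 0 < ρh := lt_of_le_of_lt (Real.sqrt_nonneg _) hρh
  -- each entry of k is at most exp (-ρh²)
  have hki : ∀ i, |k i| ≤ Real.exp (-ρh ^ 2) := by
    intro i
    have h1 : Real.sqrt 2 * ρh * σ ≤ ‖x - s i‖ := hx i
    have h2 : 2 * ρh ^ 2 * σ ^ 2 ≤ ‖x - s i‖ ^ 2 := by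
      have hp := pow_le_pow_left₀ (by positivity) h1 2
      have hs2 : Real.sqrt 2 ^ 2 = 2 := Real.sq_sqrt (by norm_num)
      nlinarith [hp, hs2]
    have hks : k i = Real.exp (-‖s i - x‖ ^ 2 / (2 * σ ^ 2)) := rfl
    rw [hks, abs_of_pos (Real.exp_pos _)]
    apply Real.exp_le_exp.mpr
    rw [div_le_iff₀ (by positivity), norm_sub_rev]
    nlinarith [h2]
  have habsk : ∀ i, 0 ≤ k i := fun i => le_of_lt (Real.exp_pos _)
  -- Γ bounds
  have hΓv : e2norm v ≤ Γ := hΓ.1 ⟨x, rfl⟩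
  have hv0 : 0 ≤ e2norm v := Real.sqrt_nonneg _
  have hΓ0 : 0 ≤ Γ := le_trans hv0 hΓv
  -- Cauchy-Schwarz: ∑ |v i| ≤ √r * e2norm v
  have hsum : ∑ i, |v i| ≤ Real.sqrt r * e2norm v := by
    have hcs := sq_sum_le_card_mul_sum_sq (s := Finset.univ) (f := fun i => |v i|)
    simp only [Finset.card_univ, Fintype.card_fin, sq_abs] at hcs
    have h0 : 0 ≤ ∑ i, |v i| := Finset.sum_nonneg fun i _ => abs_nonneg _
    have := Real.sqrt_le_sqrt hcs
    rw [Real.sqrt_sq h0, Real.sqrt_mul (by positivity)] at this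
    simpa [e2norm] using this
  -- bound on the dot product
  have hD : |dotProduct k v| ≤ Real.exp (-ρh ^ 2) * Real.sqrt r * Γ := by
    have h1 : |dotProduct k v| ≤ ∑ i, |k i * v i| := Finset.abs_sum_le_sum_abs _ _
    have h2 : ∑ i, |k i * v i| ≤ ∑ i, Real.exp (-ρh ^ 2) * |v i| := by
      apply Finset.sum_le_sum
      intro i _
      rw [abs_mul]
      exact mul_le_mul_of_nonneg_right (hki i) (abs_nonneg _)
    have h3 : ∑ i, Real.exp (-ρh ^ 2) * |v i| = Real.exp (-ρh ^ 2) * ∑ i, |v i| :=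
      (Finset.mul_sum _ _ _).symm
    have h4 : Real.exp (-ρh ^ 2) * ∑ i, |v i| ≤
        Real.exp (-ρh ^ 2) * (Real.sqrt r * Γ) := by
      apply mul_le_mul_of_nonneg_left _ (le_of_lt (Real.exp_pos _))
      calc ∑ i, |v i| ≤ Real.sqrt r * e2norm v := hsum
        _ ≤ Real.sqrt r * Γ := mul_le_mul_of_nonneg_left hΓv (Real.sqrt_nonneg _)
    calc |dotProduct k v| ≤ ∑ i, |k i * v i| := h1
      _ ≤ ∑ i, Real.exp (-ρh ^ 2) * |v i| := h2
      _ = Real.exp (-ρh ^ 2) * ∑ i, |v i| := h3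
      _ ≤ Real.exp (-ρh ^ 2) * (Real.sqrt r * Γ) := h4
      _ = Real.exp (-ρh ^ 2) * Real.sqrt r * Γ := by ring
  -- positivity of the bound
  have hB : Real.exp (-ρh ^ 2) * Real.sqrt r * Γ < 1 := by
    have h0 : 0 ≤ Real.log (Real.sqrt r * Γ) := Real.log_nonneg hΓ1
    have hlog : Real.log (Real.sqrt r * Γ) < ρh ^ 2 := by
      nlinarith [Real.sq_sqrt h0, Real.sqrt_nonneg (Real.log (Real.sqrt r * Γ))]
    have h2 : Real.sqrt r * Γ < Real.exp (ρh ^ 2) := by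
      have := Real.exp_lt_exp.mpr hlog
      rwa [Real.exp_log (by linarith)] at this
    calc Real.exp (-ρh ^ 2) * Real.sqrt r * Γ
        = Real.exp (-ρh ^ 2) * (Real.sqrt r * Γ) := by ring
      _ < Real.exp (-ρh ^ 2) * Real.exp (ρh ^ 2) :=
          (mul_lt_mul_iff_right₀ (Real.exp_pos _)).mpr h2
      _ = 1 := by rw [← Real.exp_add]; simp
  refine ⟨?_, by linarith⟩
  have hg : gauss σ x x = 1 := by simp [gauss]
  have hpc : postCov σ s x x = 1 - dotProduct k v := by
    rw [postCov, hg]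
  rw [hpc]
  have habs : 1 - |dotProduct k v| ≤ |1 - dotProduct k v| := by
    have := abs_sub_abs_le_abs_sub (1 : ℝ) (dotProduct k v)
    simpa using this
  linarith
end

section
/- For any nonempty finite set S ⊆ R^d with r points and invertible Gaussian kernel matrix K_SS, the posterior covariance satisfies |R_{S,σ}(x,y)| ≤ (1 + √r ||K_SS^{-1} K_{Sy}||_2) · dist(x,S)/(σ√e) for all x, y ∈ R^d. -/
open Real Filter Matrix

/-- the key scalar bound: `|t| e^{-t²/(2σ²)} ≤ σ e^{-1/2}` -/
lemma abs_mul_exp_le (σ : ℝ) (hσ : 0 < σ) (t : ℝ) :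
    |t| * Real.exp (-t ^ 2 / (2 * σ ^ 2)) ≤ σ * Real.exp (-(1 : ℝ) / 2) := by
  have hE : (0 : ℝ) < Real.exp (-t ^ 2 / (2 * σ ^ 2)) := Real.exp_pos _
  have h1 : t ^ 2 / (2 * σ ^ 2) - 1 / 2 + 1 ≤ Real.exp (t ^ 2 / (2 * σ ^ 2) - 1 / 2) :=
    Real.add_one_le_exp _
  have e1 : Real.exp (-t ^ 2 / (2 * σ ^ 2)) * Real.exp (t ^ 2 / (2 * σ ^ 2) - 1 / 2) =
      Real.exp (-(1 : ℝ) / 2) := by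
    rw [← Real.exp_add]; ring_nf
  have h2 : |t| ≤ σ * (t ^ 2 / (2 * σ ^ 2) + 1 / 2) := by
    have heq : σ * (t ^ 2 / (2 * σ ^ 2) + 1 / 2) = (t ^ 2 + σ ^ 2) / (2 * σ) := by
      field_simp
    rw [heq, le_div_iff₀ (by positivity)]
    nlinarith [sq_nonneg (|t| - σ), sq_abs t]
  calc |t| * Real.exp (-t ^ 2 / (2 * σ ^ 2))
      ≤ σ * (t ^ 2 / (2 * σ ^ 2) + 1 / 2) * Real.exp (-t ^ 2 / (2 * σ ^ 2)) := by
        exact mul_le_mul_of_nonneg_right h2 hE.le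
    _ ≤ σ * Real.exp (t ^ 2 / (2 * σ ^ 2) - 1 / 2) * Real.exp (-t ^ 2 / (2 * σ ^ 2)) := by
        have : t ^ 2 / (2 * σ ^ 2) + 1 / 2 ≤ Real.exp (t ^ 2 / (2 * σ ^ 2) - 1 / 2) := by
          linarith
        exact mul_le_mul_of_nonneg_right (mul_le_mul_of_nonneg_left this hσ.le) hE.le
    _ = σ * Real.exp (-(1 : ℝ) / 2) := by rw [mul_assoc, mul_comm (Real.exp _), e1]

/-- one-dimensional Lipschitz bound for the Gaussian profile. -/
lemma exp_sq_lip (σ : ℝ) (hσ : 0 < σ) (a b : ℝ) :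
    |Real.exp (-a ^ 2 / (2 * σ ^ 2)) - Real.exp (-b ^ 2 / (2 * σ ^ 2))| ≤
      |a - b| / (σ * Real.sqrt (Real.exp 1)) := by
  set f : ℝ → ℝ := fun t => Real.exp (-t ^ 2 / (2 * σ ^ 2)) with hf
  have hC : σ * Real.sqrt (Real.exp 1) > 0 := by positivity
  have hderiv : ∀ t : ℝ, HasDerivAt f (Real.exp (-t ^ 2 / (2 * σ ^ 2)) *
      (-(2 * t) / (2 * σ ^ 2))) t := by
    intro t
    have h1 : HasDerivAt (fun t : ℝ => -t ^ 2 / (2 * σ ^ 2)) (-(2 * t) / (2 * σ ^ 2)) t := by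
      have := ((hasDerivAt_pow 2 t).neg).div_const (2 * σ ^ 2)
      simpa using this
    exact h1.exp
  have hbound : ∀ t : ℝ, ‖deriv f t‖ ≤ 1 / (σ * Real.sqrt (Real.exp 1)) := by
    intro t
    rw [(hderiv t).deriv, Real.norm_eq_abs]
    have hsqrt : Real.sqrt (Real.exp 1) = Real.exp (2⁻¹ : ℝ) := by
      rw [← Real.exp_half]; norm_num
    have key := abs_mul_exp_le σ hσ t
    have habs : |Real.exp (-t ^ 2 / (2 * σ ^ 2)) * (-(2 * t) / (2 * σ ^ 2))| =
        |t| * Real.exp (-t ^ 2 / (2 * σ ^ 2)) / σ ^ 2 := by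
      rw [abs_mul, abs_div, abs_of_pos (Real.exp_pos _)]
      rw [abs_of_pos (by positivity : (0:ℝ) < 2 * σ ^ 2)]
      rw [abs_neg, abs_mul, abs_two]
      ring
    rw [habs, div_le_div_iff₀ (by positivity) hC]
    have hexp : Real.exp (-(1:ℝ)/2) * Real.sqrt (Real.exp 1) = 1 := by
      rw [hsqrt, ← Real.exp_add]; norm_num
    calc |t| * Real.exp (-t ^ 2 / (2 * σ ^ 2)) * (σ * Real.sqrt (Real.exp 1))
        ≤ σ * Real.exp (-(1:ℝ)/2) * (σ * Real.sqrt (Real.exp 1)) := by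
          exact mul_le_mul_of_nonneg_right key hC.le
      _ = σ ^ 2 * (Real.exp (-(1:ℝ)/2) * Real.sqrt (Real.exp 1)) := by ring
      _ = 1 * σ ^ 2 := by rw [hexp]; ring
  have hdiff : Differentiable ℝ f := fun t => (hderiv t).differentiableAt
  have := convex_univ.norm_image_sub_le_of_norm_deriv_le (fun t _ => hdiff t)
    (fun t _ => hbound t) (Set.mem_univ b) (Set.mem_univ a)
  rw [Real.norm_eq_abs, Real.norm_eq_abs] at this
  calc |f a - f b| ≤ 1 / (σ * Real.sqrt (Real.exp 1)) * |a - b| := this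
    _ = |a - b| / (σ * Real.sqrt (Real.exp 1)) := by ring

lemma gauss_lip (σ : ℝ) (hσ : 0 < σ) {d : ℕ} (u v y : EuclideanSpace ℝ (Fin d)) :
    |gauss σ u y - gauss σ v y| ≤ ‖u - v‖ / (σ * Real.sqrt (Real.exp 1)) := by
  have h := exp_sq_lip σ hσ ‖u - y‖ ‖v - y‖
  unfold gauss
  refine h.trans ?_
  have hC : (0:ℝ) < σ * Real.sqrt (Real.exp 1) := by positivity
  gcongr ?_ / _
  calc |‖u - y‖ - ‖v - y‖| ≤ ‖(u - y) - (v - y)‖ := abs_norm_sub_norm_le _ _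
    _ = ‖u - v‖ := by rw [show (u - y) - (v - y) = u - v by abel]

theorem stmt15 {d r : ℕ} (σ : ℝ) (hσ : 0 < σ) (hr : 0 < r)
    (s : Fin r → EuclideanSpace ℝ (Fin d)) (hK : IsUnit (kmat σ s).det) :
    ∀ x y : EuclideanSpace ℝ (Fin d),
      |postCov σ s x y| ≤ (1 + Real.sqrt r * e2norm ((kmat σ s)⁻¹ *ᵥ kvec σ s y)) *
        Metric.infDist x (Set.range s) / (σ * Real.sqrt (Real.exp 1)) := by
  intro x y
  have hC : (0:ℝ) < σ * Real.sqrt (Real.exp 1) := by positivity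
  have hne : (Set.range s).Nonempty := ⟨s ⟨0, hr⟩, Set.mem_range_self _⟩
  obtain ⟨p, hp, hdist⟩ :=
    (Set.finite_range s).isCompact.exists_infDist_eq_dist hne x
  obtain ⟨i, rfl⟩ := hp
  set w := (kmat σ s)⁻¹ *ᵥ kvec σ s y with hw
  -- postCov at s i is zero
  have hzero : postCov σ s (s i) y = 0 := by
    unfold postCov
    have hkv : kvec σ s (s i) = fun j => kmat σ s i j := by
      funext j
      show gauss σ (s j) (s i) = kmat σ s i j
      rw [gauss_symm]; rfl
    rw [hkv]
    have : dotProduct (fun j => kmat σ s i j) ((kmat σ s)⁻¹ *ᵥ kvec σ s y) =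
        (kmat σ s *ᵥ ((kmat σ s)⁻¹ *ᵥ kvec σ s y)) i := rfl
    rw [this, Matrix.mulVec_mulVec, Matrix.mul_nonsing_inv _ hK, Matrix.one_mulVec]
    show gauss σ (s i) y - gauss σ (s i) y = 0
    ring
  set D := ‖x - s i‖ / (σ * Real.sqrt (Real.exp 1)) with hD
  have hDnn : 0 ≤ D := by positivity
  -- Σ |w j| ≤ √r * e2norm w
  have hsum : ∑ j, |w j| ≤ Real.sqrt r * e2norm w := by
    have h1 : (∑ j, |w j|) ^ 2 ≤ (r : ℝ) * ∑ j, (w j) ^ 2 := by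
      have := sq_sum_le_card_mul_sum_sq (s := Finset.univ) (f := fun j => |w j|)
      simpa [sq_abs] using this
    have h2 : 0 ≤ ∑ j, |w j| := Finset.sum_nonneg fun j _ => abs_nonneg _
    have h3 : ∑ j, |w j| ≤ Real.sqrt ((r : ℝ) * ∑ j, (w j) ^ 2) := by
      rw [← Real.sqrt_sq h2]
      exact Real.sqrt_le_sqrt h1
    rwa [Real.sqrt_mul (by positivity)] at h3
  have key : |postCov σ s x y| ≤ (1 + ∑ j, |w j|) * D := by
    have hsplit : postCov σ s x y = postCov σ s x y - postCov σ s (s i) y := by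
      rw [hzero]; ring
    rw [hsplit]
    have hexpand : postCov σ s x y - postCov σ s (s i) y =
        (gauss σ x y - gauss σ (s i) y) -
          ∑ j, (gauss σ (s j) x - gauss σ (s j) (s i)) * w j := by
      unfold postCov
      rw [← hw]
      have hd : dotProduct (kvec σ s x) w - dotProduct (kvec σ s (s i)) w =
          ∑ j, (gauss σ (s j) x - gauss σ (s j) (s i)) * w j := by
        unfold dotProduct kvec
        rw [← Finset.sum_sub_distrib]
        apply Finset.sum_congr rfl
        intro j _
        ring
      linarith [hd]
    rw [hexpand]
    calc |(gauss σ x y - gauss σ (s i) y) - ∑ j, (gauss σ (s j) x - gauss σ (s j) (s i)) * w j|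
        ≤ |gauss σ x y - gauss σ (s i) y| +
            |∑ j, (gauss σ (s j) x - gauss σ (s j) (s i)) * w j| := abs_sub _ _
      _ ≤ D + ∑ j, |gauss σ (s j) x - gauss σ (s j) (s i)| * |w j| := by
          gcongr
          · exact gauss_lip σ hσ x (s i) y
          · refine (Finset.abs_sum_le_sum_abs _ _).trans ?_
            apply Finset.sum_le_sum
            intro j _
            rw [abs_mul]
      _ ≤ D + ∑ j, D * |w j| := by
          gcongr with j
          have := gauss_lip σ hσ x (s i) (s j)
          rw [gauss_symm σ (s j) x, gauss_symm σ (s j) (s i)]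
          exact this
      _ = (1 + ∑ j, |w j|) * D := by rw [← Finset.mul_sum]; ring
  refine key.trans ?_
  have hDval : Metric.infDist x (Set.range s) = ‖x - s i‖ := by
    rw [hdist, dist_eq_norm]
  rw [hDval, hD]
  rw [mul_div_assoc]
  have h1 : 0 ≤ ‖x - s i‖ / (σ * Real.sqrt (Real.exp 1)) := by positivity
  exact mul_le_mul_of_nonneg_right (by linarith [hsum]) h1
end
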